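/- arXiv:1607.00472 — 5 statements merged into one kernel-verified Lean document; each statement's English description precedes it below -/
import Mathlib

section
/- For every n ≥ 3, the cycle graph C_n satisfies b•(C_n) = 0 if n is even and b•(C_n) = 1 if n is odd. In particular, when n is odd every energy orientation of C_n has at least one black arc, and some energy orientation of C_n has exactly one black arc. -/
/-!
If an orientation has no black arc, then `edist` grows by exactly one along every arc, so its
parity is a proper 2-colouring. Hence every energy orientation of a non-bipartite graph, such as
an odd cycle, has a black arc. Conversely, orienting every edge of a bipartite graph from one
colour class to the other leaves no black arc, while orienting `C_n` along the order of `Fin n`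
leaves exactly one: the source is `0`, which reaches `n - 1` in one step, so only the arc
`(n - 2, n - 1)` is black.
-/

/-- `D` is an orientation of the simple graph `G`: each edge of `G` receives exactly one
direction, and the arcs of `D` are exactly the directed edges of `G`. -/
def IsOrientation {V : Type*} (G : SimpleGraph V) (D : V → V → Prop) : Prop :=
  (∀ u v, D u v → G.Adj u v) ∧
  (∀ u v, G.Adj u v → (D u v ∨ D v u)) ∧
  (∀ u v, D u v → ¬ D v u)

/-- An energy orientation of `G` is an orientation whose resulting digraph is acyclic,
i.e. contains no directed cycle. -/
def IsEnergyOrientation {V : Type*} (G : SimpleGraph V) (D : V → V → Prop) : Prop :=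
  IsOrientation G D ∧ ∀ v, ¬ Relation.TransGen D v v

/-- A source of the digraph `D` is a vertex of in-degree `0`. -/
def IsSource {V : Type*} (D : V → V → Prop) (s : V) : Prop :=
  ∀ u, ¬ D u s

/-- `StepsTo D k u v` means there is a directed walk of length `k` from `u` to `v` in `D`. -/
def StepsTo {V : Type*} (D : V → V → Prop) : ℕ → V → V → Prop
  | 0, u, v => u = v
  | k + 1, u, v => ∃ w, D u w ∧ StepsTo D k w v

/-- `edist D v` is the minimum, over all sources `s` of `D`, of the length of a shortest
directed path from `s` to `v`. -/
noncomputable def edist {V : Type*} (D : V → V → Prop) (v : V) : ℕ :=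
  sInf {k : ℕ | ∃ s, IsSource D s ∧ StepsTo D k s v}

/-- An arc `(u, v)` of `D` is a black arc if it lies on no shortest directed path from a source
to `v`, equivalently if `edist D v ≠ edist D u + 1`. -/
def IsBlackArc {V : Type*} (D : V → V → Prop) (u v : V) : Prop :=
  D u v ∧ edist D v ≠ edist D u + 1

/-- The number of black arcs of the digraph `D`. -/
noncomputable def blackArcCount {V : Type*} (D : V → V → Prop) : ℕ :=
  Set.ncard {p : V × V | IsBlackArc D p.1 p.2}

/-- The black arc number `b•(G)`: the minimum number of black arcs over all energy
orientations of `G`. -/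
noncomputable def blackArcNumber {V : Type*} (G : SimpleGraph V) : ℕ :=
  sInf {k : ℕ | ∃ D : V → V → Prop, IsEnergyOrientation G D ∧ blackArcCount D = k}

open SimpleGraph Relation

variable {V : Type*} {G : SimpleGraph V} {D : V → V → Prop}

section Distance

theorem StepsTo.snoc {k : ℕ} {u v w : V} (h : StepsTo D k u v) (hvw : D v w) :
    StepsTo D (k + 1) u w := by
  induction k generalizing u with
  | zero => exact ⟨w, (h : u = v) ▸ hvw, rfl⟩
  | succ k ih =>
    obtain ⟨x, hux, hx⟩ := h
    exact ⟨x, hux, ih hx⟩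

theorem StepsTo.le_add {f : V → ℕ} (hf : ∀ u v, D u v → f v ≤ f u + 1) {k : ℕ} {u v : V}
    (h : StepsTo D k u v) : f v ≤ f u + k := by
  induction k generalizing u with
  | zero => exact (h : u = v) ▸ Nat.le_add_right _ _
  | succ k ih =>
    obtain ⟨w, huw, hw⟩ := h
    have := hf u w huw
    have := ih hw
    omega

theorem edist_eq_of_potential {f : V → ℕ} (hsrc : ∀ s, IsSource D s → f s = 0)
    (hf : ∀ u v, D u v → f v ≤ f u + 1) {v : V}
    (hv : ∃ s, IsSource D s ∧ StepsTo D (f v) s v) : edist D v = f v := by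
  refine le_antisymm (Nat.sInf_le hv) (le_csInf ⟨_, hv⟩ ?_)
  rintro k ⟨s, hs, hk⟩
  simpa [hsrc s hs] using hk.le_add hf

theorem edist_eq_zero_of_isSource {s : V} (hs : IsSource D s) : edist D s = 0 :=
  Nat.sInf_eq_zero.mpr (Or.inl ⟨s, hs, rfl⟩)

theorem edist_eq_one_of_isSource {u v : V} (hu : IsSource D u) (huv : D u v) :
    edist D v = 1 := by
  refine le_antisymm (Nat.sInf_le ⟨u, hu, v, huv, rfl⟩) (le_csInf ⟨1, u, hu, v, huv, rfl⟩ ?_)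
  rintro (_ | k) ⟨s, hs, hk⟩
  · exact absurd huv ((hk : s = v) ▸ hs u)
  · omega

end Distance

section BlackArcs

theorem blackArcCount_eq_zero_iff [Finite V] :
    blackArcCount D = 0 ↔ ∀ u v, ¬ IsBlackArc D u v := by
  rw [blackArcCount, Set.ncard_eq_zero (Set.toFinite _), Set.eq_empty_iff_forall_notMem]
  simp only [Set.mem_ofPred_eq, Prod.forall]

theorem IsOrientation.isBipartite_of_forall_not_isBlackArc (hD : IsOrientation G D)
    (h : ∀ u v, ¬ IsBlackArc D u v) : G.IsBipartite := by
  have hstep : ∀ u v, D u v → edist D v = edist D u + 1 :=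
    fun u v huv => not_not.mp fun hne => h u v ⟨huv, hne⟩
  refine ⟨Coloring.mk (fun v => ⟨edist D v % 2, Nat.mod_lt _ two_pos⟩) fun {u v} huv heq => ?_⟩
  have hpar := Fin.mk.inj heq
  rcases hD.2.1 u v huv with h' | h' <;> have := hstep _ _ h' <;> omega

theorem IsOrientation.one_le_blackArcCount [Finite V] (hD : IsOrientation G D)
    (hG : ¬ G.IsBipartite) : 1 ≤ blackArcCount D :=
  Nat.one_le_iff_ne_zero.mpr fun h =>
    hG (hD.isBipartite_of_forall_not_isBlackArc (blackArcCount_eq_zero_iff.mp h))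

theorem blackArcNumber_eq_blackArcCount (hD : IsEnergyOrientation G D)
    (hmin : ∀ D', IsEnergyOrientation G D' → blackArcCount D ≤ blackArcCount D') :
    blackArcNumber G = blackArcCount D :=
  IsLeast.csInf_eq ⟨⟨D, hD, rfl⟩, by rintro _ ⟨D', hD', rfl⟩; exact hmin D' hD'⟩

end BlackArcs

section Constructions

theorem isEnergyOrientation_of_rank {β : Type*} [Preorder β] (hsub : ∀ u v, D u v → G.Adj u v)
    (hcover : ∀ u v, G.Adj u v → D u v ∨ D v u) (f : V → β) (hf : ∀ u v, D u v → f u < f v) :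
    IsEnergyOrientation G D := by
  refine ⟨⟨hsub, hcover, fun u v huv hvu => lt_asymm (hf u v huv) (hf v u hvu)⟩, fun v hv => ?_⟩
  have hlt := TransGen.lift f hf v v hv
  rw [transGen_eq_self] at hlt
  exact lt_irrefl _ hlt

def bipartiteOrientation (C : G.Coloring (Fin 2)) (u v : V) : Prop :=
  G.Adj u v ∧ C u = 0

theorem isEnergyOrientation_bipartiteOrientation (C : G.Coloring (Fin 2)) :
    IsEnergyOrientation G (bipartiteOrientation C) := by
  refine isEnergyOrientation_of_rank (fun _ _ h => h.1) (fun u v huv => ?_) C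
    fun u v ⟨huv, hu⟩ => ?_
  · have := C.valid huv
    by_cases hu : C u = 0
    · exact Or.inl ⟨huv, hu⟩
    · exact Or.inr ⟨huv.symm, by omega⟩
  · have := C.valid huv
    omega

theorem isSource_bipartiteOrientation {C : G.Coloring (Fin 2)} {v : V} (hv : C v = 0) :
    IsSource (bipartiteOrientation C) v :=
  fun _ ⟨huv, hu⟩ => C.valid huv (hu.trans hv.symm)

theorem blackArcCount_bipartiteOrientation (C : G.Coloring (Fin 2)) :
    blackArcCount (bipartiteOrientation C) = 0 := by
  have hnone : {p : V × V | IsBlackArc (bipartiteOrientation C) p.1 p.2} = ∅ := by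
    refine Set.eq_empty_of_forall_notMem ?_
    rintro ⟨u, v⟩ ⟨⟨huv, hu⟩, hb⟩
    apply hb
    rw [edist_eq_one_of_isSource (isSource_bipartiteOrientation hu) ⟨huv, hu⟩,
      edist_eq_zero_of_isSource (isSource_bipartiteOrientation hu)]
  rw [blackArcCount, hnone, Set.ncard_empty]

theorem blackArcNumber_eq_zero_of_isBipartite (hG : G.IsBipartite) : blackArcNumber G = 0 :=
  let ⟨C⟩ := hG
  Nat.sInf_eq_zero.mpr <| Or.inl
    ⟨_, isEnergyOrientation_bipartiteOrientation C, blackArcCount_bipartiteOrientation C⟩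

def ltOrientation [LinearOrder V] (G : SimpleGraph V) (u v : V) : Prop :=
  G.Adj u v ∧ u < v

theorem isEnergyOrientation_ltOrientation [LinearOrder V] (G : SimpleGraph V) :
    IsEnergyOrientation G (ltOrientation G) :=
  isEnergyOrientation_of_rank (fun _ _ h => h.1)
    (fun _ _ h => h.ne.lt_or_gt.imp (⟨h, ·⟩) (⟨h.symm, ·⟩)) id fun _ _ h => h.2

end Constructions

section Cycle

variable {n : ℕ}

theorem cycleGraph_adj_iff_val (hn : 2 ≤ n) {u v : Fin n} :
    (cycleGraph n).Adj u v ↔ u.val + 1 = v.val ∨ v.val + 1 = u.val ∨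
      (u.val = 0 ∧ v.val + 1 = n) ∨ (v.val = 0 ∧ u.val + 1 = n) := by
  rw [cycleGraph_adj']
  rcases lt_trichotomy u v with h | rfl | h
  · rw [Fin.coe_sub_iff_lt.mpr h, Fin.coe_sub_iff_le.mpr h.le]
    omega
  · rw [Fin.coe_sub_iff_le.mpr le_rfl]
    omega
  · rw [Fin.coe_sub_iff_le.mpr h.le, Fin.coe_sub_iff_lt.mpr h]
    omega

theorem isBipartite_cycleGraph_iff (hn : 2 ≤ n) : (cycleGraph n).IsBipartite ↔ Even n := by
  refine ⟨fun h => Nat.not_odd_iff_even.mp fun ho => ?_, fun he => ?_⟩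
  · have := h.chromaticNumber_le
    rw [chromaticNumber_cycleGraph_of_odd n hn ho] at this
    exact absurd this (by decide)
  · simpa using (cycleGraph.bicoloring_of_even n he).colorable

theorem ltOrientation_cycleGraph_iff (hn : 2 ≤ n) {u v : Fin n} :
    ltOrientation (cycleGraph n) u v ↔ u.val + 1 = v.val ∨ (u.val = 0 ∧ v.val + 1 = n) := by
  rw [ltOrientation, cycleGraph_adj_iff_val hn, Fin.lt_def]
  omega

theorem isSource_ltOrientation_cycleGraph_iff (hn : 2 ≤ n) {s : Fin n} :
    IsSource (ltOrientation (cycleGraph n)) s ↔ s.val = 0 := by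
  refine ⟨fun hs => ?_, fun hs u hus => ?_⟩
  · by_contra hne
    exact hs ⟨s.val - 1, by omega⟩
      ((ltOrientation_cycleGraph_iff hn).mpr (Or.inl (show s.val - 1 + 1 = s.val by omega)))
  · rw [ltOrientation_cycleGraph_iff hn] at hus
    omega

theorem stepsTo_ltOrientation_cycleGraph (hn : 2 ≤ n) {m : ℕ} (hm : m < n) :
    StepsTo (ltOrientation (cycleGraph n)) m ⟨0, by omega⟩ ⟨m, hm⟩ := by
  induction m with
  | zero => rfl
  | succ m ih => exact (ih (by omega)).snoc ((ltOrientation_cycleGraph_iff hn).mpr (Or.inl rfl))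

theorem edist_ltOrientation_cycleGraph (hn : 2 ≤ n) (v : Fin n) :
    edist (ltOrientation (cycleGraph n)) v = if v.val + 1 = n then 1 else v.val := by
  refine edist_eq_of_potential (f := fun v : Fin n => if v.val + 1 = n then 1 else v.val)
    (fun s hs => ?_) (fun u v huv => ?_) ?_
  · rw [isSource_ltOrientation_cycleGraph_iff hn] at hs
    split_ifs <;> omega
  · rw [ltOrientation_cycleGraph_iff hn] at huv
    split_ifs <;> omega
  · refine ⟨⟨0, by omega⟩, (isSource_ltOrientation_cycleGraph_iff hn).mpr rfl, ?_⟩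
    split_ifs with hv
    · exact ⟨v, (ltOrientation_cycleGraph_iff hn).mpr (Or.inr ⟨rfl, hv⟩), rfl⟩
    · exact stepsTo_ltOrientation_cycleGraph hn v.isLt

theorem blackArcCount_ltOrientation_cycleGraph (hn : 3 ≤ n) :
    blackArcCount (ltOrientation (cycleGraph n)) = 1 := by
  have hblack : {p : Fin n × Fin n | IsBlackArc (ltOrientation (cycleGraph n)) p.1 p.2} =
      {(⟨n - 2, by omega⟩, ⟨n - 1, by omega⟩)} := by
    ext ⟨u, v⟩
    simp only [Set.mem_ofPred_eq, Set.mem_singleton_iff, IsBlackArc, Prod.mk.injEq, Fin.ext_iff,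
      ltOrientation_cycleGraph_iff (show 2 ≤ n by omega),
      edist_ltOrientation_cycleGraph (show 2 ≤ n by omega)]
    split_ifs <;> omega
  rw [blackArcCount, hblack, Set.ncard_singleton]

end Cycle

/-- For every `n ≥ 3`, the cycle graph `C_n` satisfies `b•(C_n) = 0` if `n` is
even and `b•(C_n) = 1` if `n` is odd.  In particular, when `n` is odd every energy orientation
of `C_n` has at least one black arc, and some energy orientation of `C_n` has exactly one
black arc. -/
theorem cycle_blackArcNumber (n : ℕ) (hn : 3 ≤ n) :
    blackArcNumber (SimpleGraph.cycleGraph n) = (if Even n then 0 else 1) ∧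
    (Odd n →
      (∀ D : Fin n → Fin n → Prop,
        IsEnergyOrientation (SimpleGraph.cycleGraph n) D → 1 ≤ blackArcCount D) ∧
      (∃ D : Fin n → Fin n → Prop,
        IsEnergyOrientation (SimpleGraph.cycleGraph n) D ∧ blackArcCount D = 1)) := by
  have hbip := isBipartite_cycleGraph_iff (n := n) (by omega)
  have hlt := blackArcCount_ltOrientation_cycleGraph hn
  have hodd : Odd n → ∀ D, IsEnergyOrientation (cycleGraph n) D → 1 ≤ blackArcCount D :=
    fun ho _ hD => hD.1.one_le_blackArcCount (by rwa [hbip, Nat.not_even_iff_odd])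
  refine ⟨?_, fun ho => ⟨hodd ho, _, isEnergyOrientation_ltOrientation _, hlt⟩⟩
  split_ifs with he
  · exact blackArcNumber_eq_zero_of_isBipartite (hbip.mpr he)
  · rw [← hlt]
    exact blackArcNumber_eq_blackArcCount (isEnergyOrientation_ltOrientation _)
      fun D hD => hlt ▸ hodd (Nat.not_even_iff_odd.mp he) D hD
end

section
/- Let k ≥ 3, m ≥ 1 and n ≥ mk, and let a_i = i mod k. In the finite Jaco-type graph J_n((a_i)), the in-degree of the mod-sink vertex mk equals ⌊k/2⌋; equivalently, the number of integers i with 1 ≤ i < mk and mk ≤ i + (i mod k) is exactly ⌊k/2⌋. -/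
/-!
An in-neighbour `i < m k` of `m k` has `i + (i mod k) ≥ m k`, which forces `i = (m - 1) k + r`
with `2 r ≥ k`. So the in-neighbours of `m k` are exactly the `⌊k/2⌋` integers in
`[m k - ⌊k/2⌋, m k)`.
-/

/-- The arc relation of the finite Jaco-type graph `J_n((a_i))`: the vertices are
`1, 2, …, n ∈ ℕ` and `(i, j)` is an arc iff `1 ≤ i < j ≤ n` and `j ≤ i + a_i`. -/
def JacoArc (a : ℕ → ℕ) (n i j : ℕ) : Prop :=
  1 ≤ i ∧ i < j ∧ j ≤ n ∧ j ≤ i + a i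

theorem JacoArc.setOf_eq_filter {a : ℕ → ℕ} {n j : ℕ} (hj : j ≤ n) :
    {i | JacoArc a n i j} = ↑((Finset.Ico 1 j).filter (fun i => j ≤ i + a i)) := by
  ext i
  simp only [JacoArc, Set.mem_ofPred_eq, Finset.coe_filter, Finset.mem_Ico]
  exact ⟨fun ⟨h1, h2, _, h4⟩ => ⟨⟨h1, h2⟩, h4⟩, fun ⟨⟨h1, h2⟩, h4⟩ => ⟨h1, h2, hj, h4⟩⟩

theorem Nat.mul_le_add_mod_iff {i k m : ℕ} (hi : i < m * k) :
    m * k ≤ i + i % k ↔ m * k - k / 2 ≤ i := by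
  have hk : 0 < k := Nat.pos_of_ne_zero fun h => by simp [h] at hi
  have hdiv : k * (i / k) + i % k = i := Nat.div_add_mod i k
  have hmod : i % k < k := Nat.mod_lt i hk
  have hq : i / k < m :=
    Nat.lt_of_mul_lt_mul_left (a := k) (by rw [Nat.mul_comm k m]; omega)
  rcases Nat.lt_or_ge (i / k + 1) m with hfar | hlast
  · -- `i` lies at least one full block below `m k`, so both sides fail
    have : k * (i / k + 2) ≤ k * m := Nat.mul_le_mul_left k hfar
    rw [Nat.mul_add, Nat.mul_comm k m] at this
    omega
  · have : m * k = k * (i / k) + k := by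
      rw [show m = i / k + 1 by omega, Nat.add_mul, Nat.mul_comm, Nat.one_mul]
    omega

theorem Nat.filter_mul_le_add_mod_eq_Ico (k m : ℕ) :
    (Finset.Ico 1 (m * k)).filter (fun i => m * k ≤ i + i % k) =
      Finset.Ico (m * k - k / 2) (m * k) := by
  ext i
  simp only [Finset.mem_filter, Finset.mem_Ico]
  constructor
  · rintro ⟨⟨-, hi⟩, hle⟩
    exact ⟨(Nat.mul_le_add_mod_iff hi).mp hle, hi⟩
  · rintro ⟨hle, hi⟩
    have hle' := (Nat.mul_le_add_mod_iff hi).mpr hle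
    refine ⟨⟨Nat.pos_of_ne_zero ?_, hi⟩, hle'⟩
    rintro rfl
    rw [Nat.zero_mod] at hle'
    omega

theorem modk_sink_indegree_general (k m n : ℕ) (hm : 1 ≤ m) (hn : m * k ≤ n) :
    Set.ncard {i : ℕ | JacoArc (fun i => i % k) n i (m * k)} = k / 2 ∧
    ((Finset.Ico 1 (m * k)).filter (fun i => m * k ≤ i + i % k)).card = k / 2 := by
  have hcard : ((Finset.Ico 1 (m * k)).filter (fun i => m * k ≤ i + i % k)).card = k / 2 := by
    have : k ≤ m * k := Nat.le_mul_of_pos_left k hm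
    rw [Nat.filter_mul_le_add_mod_eq_Ico, Nat.card_Ico]
    omega
  refine ⟨?_, hcard⟩
  rw [JacoArc.setOf_eq_filter hn, Set.ncard_coe_finset, hcard]

/-- Let `k ≥ 3`, `m ≥ 1` and `n ≥ m·k`, and let `a_i = i mod k`.  In the
finite Jaco-type graph `J_n((a_i))` the in-degree of the mod-sink vertex `m·k` equals `⌊k/2⌋`;
equivalently, the number of integers `i` with `1 ≤ i < m·k` and `m·k ≤ i + (i mod k)` is
exactly `⌊k/2⌋`. -/
theorem modk_sink_indegree (k m n : ℕ) (hk : 3 ≤ k) (hm : 1 ≤ m) (hn : m * k ≤ n) :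
    Set.ncard {i : ℕ | JacoArc (fun i => i % k) n i (m * k)} = k / 2 ∧
    ((Finset.Ico 1 (m * k)).filter (fun i => m * k ≤ i + i % k)).card = k / 2 :=
  modk_sink_indegree_general k m n hm hn
end

section
/- Let k ≥ 1, n ≥ 1 and a_i = i mod k. The vertices of out-degree 0 (sink vertices) of the finite Jaco-type graph J_n((a_i)) are exactly the multiples of k lying in {1, …, n} together with the vertex n, and their number is ⌈n/k⌉. -/
/-!
If `a_v = 0` then `v` has no out-neighbour, and otherwise `v → v + 1` is an arc unless `v = n`.
So for `a_v = v mod k` the sinks are the `⌊n/k⌋` multiples of `k` in `(0, n]`, plus `n` itself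
when `k ∤ n`, which together make `⌈n/k⌉`.
-/

open Finset

theorem jacoArc_sink_iff {a : ℕ → ℕ} {n v : ℕ} (hv : 1 ≤ v) (hvn : v ≤ n) :
    (∀ j, ¬ JacoArc a n v j) ↔ a v = 0 ∨ v = n := by
  constructor
  · intro hsink
    by_contra! h
    exact hsink (v + 1) ⟨hv, by omega, by omega, by omega⟩
  · rintro h j ⟨-, hvj, hjn, hja⟩
    omega

theorem Nat.card_filter_dvd_or_eq_Ioc (k n : ℕ) :
    #{v ∈ Ioc 0 n | k ∣ v ∨ v = n} = n / k + if k ∣ n then 0 else 1 := by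
  split_ifs with hkn
  · rw [filter_congr fun v _ => or_iff_left_of_imp fun hv => hv ▸ hkn,
      Nat.Ioc_filter_dvd_card_eq_div, add_zero]
  · have hn : n ∈ Ioc 0 n :=
      mem_Ioc.2 ⟨Nat.pos_of_ne_zero (by rintro rfl; exact hkn (dvd_zero k)), le_rfl⟩
    have hdisj : Disjoint {v ∈ Ioc 0 n | k ∣ v} {n} := by simp [hkn]
    rw [filter_or, filter_eq', if_pos hn, card_union_of_disjoint hdisj,
      Nat.Ioc_filter_dvd_card_eq_div, card_singleton]

theorem Nat.add_pred_div_eq {k : ℕ} (hk : 0 < k) (n : ℕ) :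
    (n + k - 1) / k = n / k + if k ∣ n then 0 else 1 := by
  have hpred : (k - 1) % k = k - 1 := Nat.mod_eq_of_lt (by omega)
  rw [Nat.add_sub_assoc hk, Nat.add_div hk, Nat.div_eq_of_lt (by omega : k - 1 < k), add_zero,
    hpred]
  by_cases h : k ∣ n
  · rw [if_pos h, Nat.mod_eq_zero_of_dvd h, if_neg (by omega)]
  · have : 0 < n % k := Nat.pos_of_ne_zero (mt Nat.dvd_of_mod_eq_zero h)
    rw [if_neg h, if_pos (by omega)]

theorem modk_sinks_general (k n : ℕ) (hk : 1 ≤ k) :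
    (∀ v : ℕ, 1 ≤ v → v ≤ n →
      ((∀ j : ℕ, ¬ JacoArc (fun i => i % k) n v j) ↔ (k ∣ v ∨ v = n))) ∧
    Set.ncard {v : ℕ | 1 ≤ v ∧ v ≤ n ∧ ∀ j : ℕ, ¬ JacoArc (fun i => i % k) n v j} =
      (n + k - 1) / k := by
  have sink_iff : ∀ v : ℕ, 1 ≤ v → v ≤ n →
      ((∀ j : ℕ, ¬ JacoArc (fun i => i % k) n v j) ↔ (k ∣ v ∨ v = n)) := fun v hv hvn => by
    rw [jacoArc_sink_iff hv hvn, Nat.dvd_iff_mod_eq_zero]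
  refine ⟨sink_iff, ?_⟩
  have sinks_eq : {v : ℕ | 1 ≤ v ∧ v ≤ n ∧ ∀ j : ℕ, ¬ JacoArc (fun i => i % k) n v j} =
      ↑({v ∈ Ioc 0 n | k ∣ v ∨ v = n} : Finset ℕ) := by
    ext v
    simp only [Set.mem_ofPred_eq, coe_filter, mem_Ioc, Nat.lt_iff_add_one_le, zero_add, and_assoc]
    exact and_congr_right fun hv => and_congr_right fun hvn => sink_iff v hv hvn
  rw [sinks_eq, Set.ncard_coe_finset, Nat.card_filter_dvd_or_eq_Ioc, Nat.add_pred_div_eq hk]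

/-- Let `k ≥ 1`, `n ≥ 1` and `a_i = i mod k`.  The vertices of out-degree `0`
(sink vertices) of the finite Jaco-type graph `J_n((a_i))` are exactly the multiples of `k`
lying in `{1, …, n}` together with the vertex `n`, and their number is `⌈n/k⌉`. -/
theorem modk_sinks (k n : ℕ) (hk : 1 ≤ k) (hn : 1 ≤ n) :
    (∀ v : ℕ, 1 ≤ v → v ≤ n →
      ((∀ j : ℕ, ¬ JacoArc (fun i => i % k) n v j) ↔ (k ∣ v ∨ v = n))) ∧
    Set.ncard {v : ℕ | 1 ≤ v ∧ v ≤ n ∧ ∀ j : ℕ, ¬ JacoArc (fun i => i % k) n v j} =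
      (n + k - 1) / k :=
  modk_sinks_general k n hk
end

section
/- Let a_i = i mod 4. For every n ≥ 4, the black arc number of the finite Jaco-type graph J_n((a_i)) equals ⌊n/2⌋ − 1; that is, the Jaco-type Black Arc Algorithm applied to J_n((a_i)) outputs exactly ⌊n/2⌋ − 1 black arcs. -/
/-- The arc set of the finite Jaco-type graph `J_n((a_i))`, as a set of ordered pairs. -/
def jacoArcSet (a : ℕ → ℕ) (n : ℕ) : Set (ℕ × ℕ) :=
  {p : ℕ × ℕ | JacoArc a n p.1 p.2}

/-- Given an arc set `A`, `blackAt i A` is the set of arcs of `A` both of whose endpoints are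
out-neighbours of vertex `i` in `A` (the arcs of the subgraph induced by the
out-neighbourhood of `i`). -/
def blackAt (i : ℕ) (A : Set (ℕ × ℕ)) : Set (ℕ × ℕ) :=
  {p ∈ A | (i, p.1) ∈ A ∧ (i, p.2) ∈ A}

/-- The Jaco-type Black Arc Algorithm: `algG A m` is the arc set `G_{m+1}` obtained from
`G_1 = A` by deleting, for `i = 1, …, m`, the arc set `B_i = blackAt i G_i` at step `i`. -/
def algG (A : Set (ℕ × ℕ)) : ℕ → Set (ℕ × ℕ)
  | 0 => A
  | m + 1 => algG A m \ blackAt (m + 1) (algG A m)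

/-- The set of black arcs output by the Jaco-type Black Arc Algorithm on an arc set `A` with
`n` vertices: `B = B_1 ∪ ⋯ ∪ B_{n−1}` where `B_i = blackAt i G_i` and `G_i = algG A (i−1)`. -/
def blackSet (A : Set (ℕ × ℕ)) (n : ℕ) : Set (ℕ × ℕ) :=
  ⋃ i ∈ Finset.Icc 1 (n - 1), blackAt i (algG A (i - 1))

/-!
For `a_i = i mod 4` the arcs of `J_n` are `(i, i+1)` for `i ≢ 0`, `(i, i+2)` for `i ≡ 2, 3` and
`(i, i+3)` for `i ≡ 3 (mod 4)`. Step `i ≡ 2` blackens `(i+1, i+2)` and step `i ≡ 3` blackens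
`(i+2, i+3)`, and no other step finds an arc among its out-neighbours. So the black arcs are
exactly the rungs `(2k+1, 2k+2)` with `1 ≤ k` and `2k+2 ≤ n`, of which there are `⌊n/2⌋ − 1`.
-/

theorem algG_subset (A : Set (ℕ × ℕ)) : ∀ m, algG A m ⊆ A
  | 0 => le_rfl
  | m + 1 => Set.sdiff_subset.trans (algG_subset A m)

theorem algG_eq_sdiff_biUnion (A : Set (ℕ × ℕ)) :
    ∀ m, algG A m = A \ ⋃ i ∈ Finset.Icc 1 m, blackAt i (algG A (i - 1))
  | 0 => by simp [algG]
  | m + 1 => by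
    rw [← Finset.insert_Icc_right_eq_Icc_add_one (by omega), Finset.set_biUnion_insert,
      Set.union_comm, ← Set.sdiff_sdiff, ← algG_eq_sdiff_biUnion A m]
    rfl

theorem blackSet_eq_sdiff_algG (A : Set (ℕ × ℕ)) (n : ℕ) :
    blackSet A n = A \ algG A (n - 1) := by
  have blackSet_subset : blackSet A n ⊆ A :=
    Set.iUnion₂_subset fun i _ => (Set.sep_subset _ _).trans (algG_subset A _)
  rw [algG_eq_sdiff_biUnion, ← blackSet, Set.sdiff_sdiff_cancel_left blackSet_subset]

/-- The arcs blackened during the first `m` steps on `J_n((i mod 4))`: the rung `(x, x+1)` is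
blackened at step `x - 1` if `x ≡ 3` and at step `x - 2` if `x ≡ 1 (mod 4)`. -/
def mod4BlackenedArcs (n m : ℕ) : Set (ℕ × ℕ) :=
  {p | p.2 = p.1 + 1 ∧ 3 ≤ p.1 ∧ p.2 ≤ n ∧
    ((p.1 % 4 = 3 ∧ p.1 ≤ m + 1) ∨ (p.1 % 4 = 1 ∧ p.1 ≤ m + 2))}

theorem algG_jacoArcSet_mod4 (n : ℕ) : ∀ m,
    algG (jacoArcSet (fun i => i % 4) n) m =
      jacoArcSet (fun i => i % 4) n \ mod4BlackenedArcs n m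
  | 0 => by
    ext ⟨x, y⟩
    simp only [algG, jacoArcSet, JacoArc, mod4BlackenedArcs, Set.mem_ofPred_eq, Set.mem_sdiff]
    omega
  | m + 1 => by
    rw [algG, algG_jacoArcSet_mod4 n m]
    ext ⟨x, y⟩
    simp only [blackAt, jacoArcSet, JacoArc, mod4BlackenedArcs, Set.mem_ofPred_eq, Set.mem_sdiff]
    omega

theorem blackSet_jacoArcSet_mod4 (n : ℕ) :
    blackSet (jacoArcSet (fun i => i % 4) n) n =
      ((Finset.Icc 1 (n / 2 - 1)).image fun k => (2 * k + 1, 2 * k + 2) : Set (ℕ × ℕ)) := by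
  rw [blackSet_eq_sdiff_algG, algG_jacoArcSet_mod4]
  ext ⟨x, y⟩
  simp only [jacoArcSet, JacoArc, mod4BlackenedArcs, Set.mem_sdiff, Set.mem_ofPred_eq,
    Finset.coe_image, Set.mem_image, Finset.mem_coe, Finset.mem_Icc, Prod.mk.injEq]
  refine ⟨fun h => ⟨(x - 1) / 2, by omega⟩, ?_⟩
  rintro ⟨k, hk, rfl, rfl⟩
  omega

theorem mod4_blackArcNumber_general (n : ℕ) :
    Set.ncard (blackSet (jacoArcSet (fun i => i % 4) n) n) = n / 2 - 1 := by
  have rung_injective : Function.Injective fun k : ℕ => (2 * k + 1, 2 * k + 2) :=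
    fun a b h => by simp only [Prod.mk.injEq] at h; omega
  rw [blackSet_jacoArcSet_mod4, Set.ncard_coe_finset,
    Finset.card_image_of_injective _ rung_injective, Nat.card_Icc]
  omega

/-- Let `a_i = i mod 4`.  For every `n ≥ 4`, the black arc number of the
finite Jaco-type graph `J_n((a_i))` equals `⌊n/2⌋ − 1`: the Jaco-type Black Arc Algorithm
applied to `J_n((a_i))` outputs exactly `⌊n/2⌋ − 1` black arcs. -/
theorem mod4_blackArcNumber (n : ℕ) (hn : 4 ≤ n) :
    Set.ncard (blackSet (jacoArcSet (fun i => i % 4) n) n) = n / 2 - 1 :=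
  mod4_blackArcNumber_general n
end

section
/- Let a_i = i (the sequence of natural numbers). For every N ≥ 1 and every vertex i ∈ {1, …, N} of the finite Jaco-type graph J_N((a_i)), the out-degree of vertex i equals min(i, N − i). In particular, for N = 2^{n+1} one has d⁺(i) = i for 1 ≤ i ≤ 2^n and d⁺(2^n + k) = 2^n − k for 1 ≤ k ≤ 2^n, which is exactly the out-degree sequence prescribed for the graphical embodiment 𝒢_n of the binary code of bit width n; hence 𝒢_n ≅ J_{2^{n+1}}((a_i)). -/
/-- The out-degree prescribed for the graphical embodiment `𝒢_n` of the binary code of bit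
width `n`: `d⁺(u_i) = b_i + 1 = i` for `1 ≤ i ≤ 2^n` and `d⁺(u_{2^n+k}) = 2^n − k` for
`1 ≤ k ≤ 2^n`. -/
def binCodeOutDeg (n i : ℕ) : ℕ :=
  if i ≤ 2 ^ n then i else 2 ^ n - (i - 2 ^ n)

/-- The graphical embodiment `𝒢_n` of the binary code of bit width `n`: the digraph on
vertices `1, …, 2^{n+1}` in which the out-neighbours of vertex `i` are the next
`binCodeOutDeg n i` vertices. -/
def BinCodeArc (n i j : ℕ) : Prop :=
  1 ≤ i ∧ i < j ∧ j ≤ 2 ^ (n + 1) ∧ j ≤ i + binCodeOutDeg n i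

theorem setOf_jacoArc_eq_Ioc (a : ℕ → ℕ) (N : ℕ) {i : ℕ} (hi : 1 ≤ i) :
    {j : ℕ | JacoArc a N i j} = Finset.Ioc i (min (i + a i) N) := by
  ext j
  simp only [JacoArc, Set.mem_ofPred_eq, Finset.coe_Ioc, Set.mem_Ioc, le_min_iff]
  omega

theorem ncard_setOf_jacoArc (a : ℕ → ℕ) (N : ℕ) {i : ℕ} (hi : 1 ≤ i) :
    Set.ncard {j : ℕ | JacoArc a N i j} = min (a i) (N - i) := by
  rw [setOf_jacoArc_eq_Ioc a N hi, Set.ncard_coe_finset, Nat.card_Ioc]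
  omega

-- Truncated subtraction makes both sides vanish beyond `2 ^ (n + 1)`, so no bound on `i` is needed.
theorem binCodeOutDeg_eq_min (n i : ℕ) : binCodeOutDeg n i = min i (2 ^ (n + 1) - i) := by
  rw [binCodeOutDeg, pow_succ]
  split <;> omega

theorem binCodeArc_iff_jacoArc (n i j : ℕ) :
    BinCodeArc n i j ↔ JacoArc (fun i => i) (2 ^ (n + 1)) i j := by
  rw [BinCodeArc, JacoArc, binCodeOutDeg_eq_min]
  omega

theorem jaco_nat_outDegree_general (N : ℕ) (n : ℕ) :
    (∀ i : ℕ, 1 ≤ i → i ≤ N →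
      Set.ncard {j : ℕ | JacoArc (fun i => i) N i j} = min i (N - i)) ∧
    (∀ i : ℕ, 1 ≤ i → i ≤ 2 ^ n →
      Set.ncard {j : ℕ | JacoArc (fun i => i) (2 ^ (n + 1)) i j} = i) ∧
    (∀ k : ℕ, 1 ≤ k → k ≤ 2 ^ n →
      Set.ncard {j : ℕ | JacoArc (fun i => i) (2 ^ (n + 1)) (2 ^ n + k) j} = 2 ^ n - k) ∧
    (∀ i j : ℕ, BinCodeArc n i j ↔ JacoArc (fun i => i) (2 ^ (n + 1)) i j) := by
  have hpow : 2 ^ (n + 1) = 2 * 2 ^ n := by ring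
  refine ⟨fun i hi _ => ncard_setOf_jacoArc _ N hi, fun i hi hin => ?_, fun k hk hkn => ?_,
    binCodeArc_iff_jacoArc n⟩
  · rw [ncard_setOf_jacoArc _ _ hi]
    omega
  · rw [ncard_setOf_jacoArc _ _ (by omega)]
    omega

/-- Let `a_i = i`.  For every `N ≥ 1` and every vertex `i ∈ {1, …, N}` of the
finite Jaco-type graph `J_N((a_i))`, the out-degree of `i` equals `min(i, N − i)`.  In
particular, for `N = 2^{n+1}` one has `d⁺(i) = i` for `1 ≤ i ≤ 2^n` and
`d⁺(2^n + k) = 2^n − k` for `1 ≤ k ≤ 2^n`, which is exactly the out-degree sequence of the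
graphical embodiment `𝒢_n` of the binary code of bit width `n`; hence
`𝒢_n ≅ J_{2^{n+1}}((a_i))` (indeed the two digraphs have the same arcs). -/
theorem jaco_nat_outDegree (N : ℕ) (hN : 1 ≤ N) (n : ℕ) :
    (∀ i : ℕ, 1 ≤ i → i ≤ N →
      Set.ncard {j : ℕ | JacoArc (fun i => i) N i j} = min i (N - i)) ∧
    (∀ i : ℕ, 1 ≤ i → i ≤ 2 ^ n →
      Set.ncard {j : ℕ | JacoArc (fun i => i) (2 ^ (n + 1)) i j} = i) ∧
    (∀ k : ℕ, 1 ≤ k → k ≤ 2 ^ n →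
      Set.ncard {j : ℕ | JacoArc (fun i => i) (2 ^ (n + 1)) (2 ^ n + k) j} = 2 ^ n - k) ∧
    (∀ i j : ℕ, BinCodeArc n i j ↔ JacoArc (fun i => i) (2 ^ (n + 1)) i j) :=
  jaco_nat_outDegree_general N n
end
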